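/- arXiv:2105.02695 — 5 statements merged into one kernel-verified Lean document; each statement's English description precedes it below -/
import Mathlib

section
/- Lemma (squared-weight bound): for every β > 0 and all v, w ∈ ℝ^d, ( γ_β(v,w) )² ≤ ξ_β · γ_{2β}(v,w), where ξ_β := (1 + exp(−2β(𝓔̄ − 𝓔̲)))/(1 + exp(−β(𝓔̄ − 𝓔̲)))². -/
/-!
Write `x = exp (-β 𝓔 v)`, `y = exp (-β 𝓔 w)` and `q = exp (-β (𝓔̄ - 𝓔̲))`, so that `γ_{2β}(v,w)`
is `y² / (x² + y²)`. After clearing denominators the claim becomes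
`(x² + y²)(1 + q)² ≤ (1 + q²)(x + y)²`, i.e. `(y - q x)(x - q y) ≥ 0`, and both factors are
nonnegative because the ratio of two weights lies in `[q, q⁻¹]`.
-/

open Real

theorem sq_add_sq_mul_one_add_sq_le {x y q : ℝ} (hqx : q * x ≤ y) (hqy : q * y ≤ x) :
    (x ^ 2 + y ^ 2) * (1 + q) ^ 2 ≤ (1 + q ^ 2) * (x + y) ^ 2 := by
  nlinarith [mul_nonneg (sub_nonneg.2 hqx) (sub_nonneg.2 hqy)]

theorem div_add_sq_le_mul_sq_div_sq_add {x y q : ℝ} (hx : 0 < x) (hy : 0 < y) (hq : 0 ≤ q)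
    (hqx : q * x ≤ y) (hqy : q * y ≤ x) :
    (y / (x + y)) ^ 2 ≤ (1 + q ^ 2) / (1 + q) ^ 2 * (y ^ 2 / (x ^ 2 + y ^ 2)) := by
  rw [div_pow, div_mul_div_comm, div_le_div_iff₀ (by positivity) (by positivity)]
  calc y ^ 2 * ((1 + q) ^ 2 * (x ^ 2 + y ^ 2))
      = y ^ 2 * ((x ^ 2 + y ^ 2) * (1 + q) ^ 2) := by ring
    _ ≤ y ^ 2 * ((1 + q ^ 2) * (x + y) ^ 2) :=
        mul_le_mul_of_nonneg_left (sq_add_sq_mul_one_add_sq_le hqx hqy) (sq_nonneg y)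
    _ = (1 + q ^ 2) * y ^ 2 * (x + y) ^ 2 := by ring

theorem exp_neg_mul_sub_mul_exp_neg_mul_le {β m M a b : ℝ} (hβ : 0 ≤ β) (ha : m ≤ a)
    (hb : b ≤ M) : exp (-β * (M - m)) * exp (-β * a) ≤ exp (-β * b) := by
  rw [← exp_add, exp_le_exp]
  nlinarith

theorem exp_neg_two_mul_mul (β c : ℝ) : exp (-(2 * β) * c) = exp (-β * c) ^ 2 := by
  rw [sq, ← exp_add]
  ring_nf

theorem squared_weight_bound_general {d : ℕ}
    (𝓔 : EuclideanSpace ℝ (Fin d) → ℝ)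
    (hbA : BddAbove (Set.range 𝓔)) (hbB : BddBelow (Set.range 𝓔))
    (β : ℝ) (hβ : 0 < β) (v w : EuclideanSpace ℝ (Fin d)) :
    let γ : ℝ → EuclideanSpace ℝ (Fin d) → EuclideanSpace ℝ (Fin d) → ℝ :=
      fun b x y => Real.exp (-b * 𝓔 y) / (Real.exp (-b * 𝓔 x) + Real.exp (-b * 𝓔 y))
    let Einf := sInf (Set.range 𝓔)
    let Esup := sSup (Set.range 𝓔)
    let ξβ := (1 + Real.exp (-2 * β * (Esup - Einf))) /
      (1 + Real.exp (-β * (Esup - Einf))) ^ 2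
    (γ β v w) ^ 2 ≤ ξβ * γ (2 * β) v w := by
  intro γ Einf Esup ξβ
  have le_sup (u) : 𝓔 u ≤ Esup := le_csSup hbA ⟨u, rfl⟩
  have inf_le (u) : Einf ≤ 𝓔 u := csInf_le hbB ⟨u, rfl⟩
  have hξ : ξβ = (1 + exp (-β * (Esup - Einf)) ^ 2) / (1 + exp (-β * (Esup - Einf))) ^ 2 := by
    rw [← exp_neg_two_mul_mul, neg_mul_eq_neg_mul]
  change (exp (-β * 𝓔 w) / (exp (-β * 𝓔 v) + exp (-β * 𝓔 w))) ^ 2 ≤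
    ξβ * (exp (-(2 * β) * 𝓔 w) / (exp (-(2 * β) * 𝓔 v) + exp (-(2 * β) * 𝓔 w)))
  rw [hξ, exp_neg_two_mul_mul, exp_neg_two_mul_mul]
  exact div_add_sq_le_mul_sq_div_sq_add (exp_pos _) (exp_pos _) (exp_pos _).le
    (exp_neg_mul_sub_mul_exp_neg_mul_le hβ.le (inf_le v) (le_sup w))
    (exp_neg_mul_sub_mul_exp_neg_mul_le hβ.le (inf_le w) (le_sup v))

/-- Squared-weight bound: `(γ_β(v,w))² ≤ ξ_β · γ_{2β}(v,w)`. -/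
theorem squared_weight_bound {d : ℕ} (hd : 1 ≤ d)
    (𝓔 : EuclideanSpace ℝ (Fin d) → ℝ)
    (hbA : BddAbove (Set.range 𝓔)) (hbB : BddBelow (Set.range 𝓔))
    (β : ℝ) (hβ : 0 < β) (v w : EuclideanSpace ℝ (Fin d)) :
    let γ : ℝ → EuclideanSpace ℝ (Fin d) → EuclideanSpace ℝ (Fin d) → ℝ :=
      fun b x y => Real.exp (-b * 𝓔 y) / (Real.exp (-b * 𝓔 x) + Real.exp (-b * 𝓔 y))
    let Einf := sInf (Set.range 𝓔)
    let Esup := sSup (Set.range 𝓔)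
    let ξβ := (1 + Real.exp (-2 * β * (Esup - Einf))) /
      (1 + Real.exp (-β * (Esup - Einf))) ^ 2
    (γ β v w) ^ 2 ≤ ξβ * γ (2 * β) v w :=
  squared_weight_bound_general 𝓔 hbA hbB β hβ v w
end

section
/- Bound on the quadratic alignment term: for every β > 0, ∫∫ ( γ_β(v,v_*) )² ‖v − v_*‖² dμ(v) dμ(v_*) ≤ ∫ ‖v − m‖² dμ(v). -/
/-!
Symmetrize in `(v, v_*)`: since `γ_β(v,v_*) + γ_β(v_*,v) = 1` with both terms nonnegative,
`γ_β(v,v_*)² + γ_β(v_*,v)² ≤ 1`, so twice the left-hand side is at most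
`∫∫ ‖v - v_*‖² dμ dμ`. Expanding the square around the mean `m`, the cross term integrates to
zero and this double integral equals `2 ∫ ‖v - m‖² dμ`.
-/

open MeasureTheory Function

section Symmetrization

variable {α : Type*} [MeasurableSpace α] {μ : Measure α} [SFinite μ]

theorem two_mul_integral_integral_mul_le {g K : α → α → ℝ}
    (hg_meas : AEStronglyMeasurable (uncurry g) (μ.prod μ))
    (hg_nonneg : ∀ x y, 0 ≤ g x y) (hg_add : ∀ x y, g x y + g y x ≤ 1)
    (hK : Integrable (uncurry K) (μ.prod μ))
    (hK_nonneg : ∀ x y, 0 ≤ K x y) (hK_symm : ∀ x y, K x y = K y x) :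
    2 * ∫ x, ∫ y, g x y * K x y ∂μ ∂μ ≤ ∫ x, ∫ y, K x y ∂μ ∂μ := by
  have hK' : Integrable (fun p : α × α => K p.1 p.2) (μ.prod μ) := hK
  have hgK : Integrable (fun p : α × α => g p.1 p.2 * K p.1 p.2) (μ.prod μ) := by
    refine hK'.mono' (hg_meas.mul hK.1) (ae_of_all _ fun p => ?_)
    have hg_le_one : g p.1 p.2 ≤ 1 := by linarith [hg_nonneg p.2 p.1, hg_add p.1 p.2]
    rw [Real.norm_eq_abs, abs_of_nonneg (mul_nonneg (hg_nonneg _ _) (hK_nonneg _ _))]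
    exact mul_le_of_le_one_left (hK_nonneg _ _) hg_le_one
  have hgK_swap : Integrable (fun p : α × α => g p.2 p.1 * K p.1 p.2) (μ.prod μ) := by
    refine hgK.swap.congr (ae_of_all _ fun p => ?_)
    change g p.2 p.1 * K p.2 p.1 = _
    rw [hK_symm]
  have h_swap : ∫ p, g p.1 p.2 * K p.1 p.2 ∂μ.prod μ = ∫ p, g p.2 p.1 * K p.1 p.2 ∂μ.prod μ := by
    rw [← integral_prod_swap]
    simp only [Prod.fst_swap, Prod.snd_swap, hK_symm]
  rw [integral_integral (f := fun x y => g x y * K x y) hgK, integral_integral hK]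
  calc 2 * ∫ p, g p.1 p.2 * K p.1 p.2 ∂μ.prod μ
      = ∫ p, (g p.1 p.2 * K p.1 p.2 + g p.2 p.1 * K p.1 p.2) ∂μ.prod μ := by
        rw [integral_add hgK hgK_swap, ← h_swap, two_mul]
    _ ≤ ∫ p, K p.1 p.2 ∂μ.prod μ := by
        refine integral_mono (hgK.add hgK_swap) hK fun p => ?_
        rw [← add_mul]
        exact mul_le_of_le_one_left (hK_nonneg _ _) (hg_add _ _)

end Symmetrization

section Variance

variable {Ω E : Type*} [MeasurableSpace Ω] {μ : Measure Ω} [NormedAddCommGroup E] {X : Ω → E}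

theorem integrable_norm_sub_sq_prod [IsFiniteMeasure μ] (hX : MemLp X 2 μ) :
    Integrable (uncurry fun ω ω' => ‖X ω - X ω'‖ ^ 2) (μ.prod μ) := by
  have hX₂ : MemLp (fun p : Ω × Ω => X p.1 - X p.2) 2 (μ.prod μ) :=
    (hX.comp_fst μ).sub (hX.comp_snd μ)
  exact (memLp_two_iff_integrable_sq_norm hX₂.1).1 hX₂

variable [IsProbabilityMeasure μ] [InnerProductSpace ℝ E] [CompleteSpace E]

theorem integral_norm_sub_sq_eq (hX : MemLp X 2 μ) (x : E) :
    ∫ ω, ‖x - X ω‖ ^ 2 ∂μ = ‖x - ∫ ω, X ω ∂μ‖ ^ 2 + ∫ ω, ‖X ω - ∫ ω, X ω ∂μ‖ ^ 2 ∂μ := by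
  set m := ∫ ω, X ω ∂μ
  have hXm : MemLp (fun ω => X ω - m) 2 μ := hX.sub (memLp_const m)
  have hXm_int : Integrable (fun ω => X ω - m) μ := hXm.integrable one_le_two
  have hXm_sq : Integrable (fun ω => ‖X ω - m‖ ^ 2) μ :=
    (memLp_two_iff_integrable_sq_norm hXm.1).1 hXm
  have h_centered : ∫ ω, X ω - m ∂μ = 0 := by
    rw [integral_sub (hX.integrable one_le_two) (integrable_const m), integral_const,
      probReal_univ, one_smul, sub_self]
  have h_expand : ∀ ω, ‖x - X ω‖ ^ 2
      = ‖x - m‖ ^ 2 - 2 * inner ℝ (x - m) (X ω - m) + ‖X ω - m‖ ^ 2 := fun ω => by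
    rw [← norm_sub_sq_real, sub_sub_sub_cancel_right]
  have h_cross : Integrable (fun ω => 2 * inner ℝ (x - m) (X ω - m)) μ :=
    (hXm_int.const_inner _).const_mul 2
  simp_rw [h_expand]
  rw [integral_add (f := fun ω => ‖x - m‖ ^ 2 - 2 * inner ℝ (x - m) (X ω - m))
      ((integrable_const _).sub h_cross) hXm_sq,
    integral_sub (integrable_const _) h_cross, integral_const,
    probReal_univ, one_smul, integral_const_mul, integral_inner hXm_int, h_centered,
    inner_zero_right, mul_zero, sub_zero]

theorem integral_integral_norm_sub_sq (hX : MemLp X 2 μ) :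
    ∫ ω, ∫ ω', ‖X ω - X ω'‖ ^ 2 ∂μ ∂μ = 2 * ∫ ω, ‖X ω - ∫ ω, X ω ∂μ‖ ^ 2 ∂μ := by
  have hXm_sq : Integrable (fun ω => ‖X ω - ∫ ω, X ω ∂μ‖ ^ 2) μ := by
    have hXm := hX.sub (memLp_const (∫ ω, X ω ∂μ))
    exact (memLp_two_iff_integrable_sq_norm hXm.1).1 hXm
  simp_rw [integral_norm_sub_sq_eq hX]
  rw [integral_add hXm_sq (integrable_const _), integral_const, probReal_univ, one_smul,
    two_mul]

end Variance

theorem quadratic_alignment_bound_general {d : ℕ}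
    (μ : Measure (EuclideanSpace ℝ (Fin d))) [IsProbabilityMeasure μ]
    (𝓔 : EuclideanSpace ℝ (Fin d) → ℝ) (h𝓔 : Measurable 𝓔)
    (hmom : Integrable (fun v => ‖v‖ ^ 2) μ)
    (β : ℝ) :
    let γ : EuclideanSpace ℝ (Fin d) → EuclideanSpace ℝ (Fin d) → ℝ :=
      fun x y => Real.exp (-β * 𝓔 y) / (Real.exp (-β * 𝓔 x) + Real.exp (-β * 𝓔 y))
    let m := ∫ v, v ∂μ
    (∫ v, ∫ w, (γ v w) ^ 2 * ‖v - w‖ ^ 2 ∂μ ∂μ) ≤ ∫ v, ‖v - m‖ ^ 2 ∂μ := by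
  intro γ m
  have hX : MemLp (fun v => v) 2 μ :=
    (memLp_two_iff_integrable_sq_norm aestronglyMeasurable_id).2 hmom
  have hγ_nonneg : ∀ v w, 0 ≤ γ v w := fun v w => by positivity
  have hγ_add : ∀ v w, γ v w + γ w v = 1 := fun v w => by
    simp only [γ]
    rw [add_comm (Real.exp _) (Real.exp (-β * 𝓔 v)), ← add_div, add_comm,
      div_self (by positivity)]
  have hγ_meas : AEStronglyMeasurable (uncurry fun v w => γ v w ^ 2) (μ.prod μ) := by
    refine Measurable.aestronglyMeasurable ?_
    simp only [γ, uncurry_def]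
    fun_prop
  have h_sym := two_mul_integral_integral_mul_le hγ_meas (fun v w => sq_nonneg (γ v w))
    (fun v w => by nlinarith [hγ_add v w, hγ_nonneg v w, hγ_nonneg w v])
    (integrable_norm_sub_sq_prod hX) (fun _ _ => sq_nonneg _) (fun v w => by rw [norm_sub_rev])
  have h_var := integral_integral_norm_sub_sq hX
  linarith

/-- Bound on the quadratic alignment term:
`∫∫ (γ_β(v,v_*))² ‖v - v_*‖² dμ dμ ≤ ∫ ‖v - m‖² dμ`. -/
theorem quadratic_alignment_bound {d : ℕ} (hd : 1 ≤ d)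
    (μ : Measure (EuclideanSpace ℝ (Fin d))) [IsProbabilityMeasure μ]
    (𝓔 : EuclideanSpace ℝ (Fin d) → ℝ) (h𝓔 : Measurable 𝓔)
    (hmom : Integrable (fun v => ‖v‖ ^ 2) μ)
    (β : ℝ) (hβ : 0 < β) :
    let γ : EuclideanSpace ℝ (Fin d) → EuclideanSpace ℝ (Fin d) → ℝ :=
      fun x y => Real.exp (-β * 𝓔 y) / (Real.exp (-β * 𝓔 x) + Real.exp (-β * 𝓔 y))
    let m := ∫ v, v ∂μ
    (∫ v, ∫ w, (γ v w) ^ 2 * ‖v - w‖ ^ 2 ∂μ ∂μ) ≤ ∫ v, ‖v - m‖ ^ 2 ∂μ :=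
  quadratic_alignment_bound_general μ 𝓔 h𝓔 hmom β
end

section
/- Bound on the cross alignment term: for every β > 0, ∫∫ γ_β(v,v_*) ⟨v − m, v_* − v⟩ dμ(v) dμ(v_*) ≤ −(1 − ξ_β) · (1/2) ∫ ‖v − m‖² dμ(v), where ξ_β := (1 + exp(−2β(𝓔̄ − 𝓔̲)))/(1 + exp(−β(𝓔̄ − 𝓔̲)))². -/
open MeasureTheory Function

/-!
Since `γ(v, w) + γ(w, v) = 1`, symmetrizing the double integral of `γ(v, w) ⟨v - m, w - m⟩`
turns it into half of `∫∫ ⟨v - m, w - m⟩ = ‖∫ (v - m)‖² = 0`. Writing `w - v = (w - m) - (v - m)`,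
the cross alignment term is therefore `-∫∫ γ(v, w) ‖v - m‖²`. Finally `ω_β(w) ≥ e ω_β(v)` with
`e = exp (-β (𝓔̄ - 𝓔̲))`, so `γ ≥ e / (1 + e) ≥ e / (1 + e)² = (1 - ξ_β) / 2`.
-/

/-- `γ_β = pairWeight ω_β`. -/
noncomputable def pairWeight {α : Type*} (ω : α → ℝ) (x y : α) : ℝ := ω y / (ω x + ω y)

namespace pairWeight

variable {α : Type*} {ω : α → ℝ}

theorem add_swap (hω : ∀ x, 0 < ω x) (x y : α) : pairWeight ω x y + pairWeight ω y x = 1 := by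
  have hx := hω x
  have hy := hω y
  unfold pairWeight
  field_simp
  ring

theorem div_one_add_le {e : ℝ} (he : 0 ≤ e) (hω : ∀ x, 0 < ω x) {x y : α}
    (h : e * ω x ≤ ω y) : e / (1 + e) ≤ pairWeight ω x y := by
  have hx := hω x
  have hy := hω y
  unfold pairWeight
  rw [div_le_div_iff₀ (by positivity) (by positivity)]
  linarith

theorem measurable_uncurry [MeasurableSpace α] (hω : Measurable ω) :
    Measurable (uncurry (pairWeight ω)) :=
  (hω.comp measurable_snd).div ((hω.comp measurable_fst).add (hω.comp measurable_snd))

end pairWeight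

theorem integral_prod_mul_of_add_swap_eq_one {α : Type*} [MeasurableSpace α] {μ : Measure α}
    [SFinite μ] {γ f : α → α → ℝ} (hγ : ∀ x y, γ x y + γ y x = 1) (hf : ∀ x y, f x y = f y x)
    (hγf : Integrable (fun p : α × α => γ p.1 p.2 * f p.1 p.2) (μ.prod μ)) :
    ∫ p, γ p.1 p.2 * f p.1 p.2 ∂(μ.prod μ) = (1 / 2) * ∫ p, f p.1 p.2 ∂(μ.prod μ) := by
  have hswap : ∫ p, γ p.2 p.1 * f p.1 p.2 ∂(μ.prod μ) =
      ∫ p, γ p.1 p.2 * f p.1 p.2 ∂(μ.prod μ) := by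
    rw [← integral_prod_swap]
    simp only [Prod.fst_swap, Prod.snd_swap, hf]
  have hsum : ∫ p, f p.1 p.2 ∂(μ.prod μ) =
      ∫ p, (γ p.1 p.2 * f p.1 p.2 + γ p.2 p.1 * f p.1 p.2) ∂(μ.prod μ) := by
    simp only [← add_mul, hγ, one_mul]
  have hγf_swap : Integrable (fun p : α × α => γ p.2 p.1 * f p.1 p.2) (μ.prod μ) := by
    simpa only [comp_def, Prod.fst_swap, Prod.snd_swap, hf] using hγf.swap
  rw [hsum, integral_add hγf hγf_swap, hswap]
  ring

theorem integrable_inner_fst_snd {α β E : Type*} [MeasurableSpace α] [MeasurableSpace β]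
    [NormedAddCommGroup E] [InnerProductSpace ℝ E] {μ : Measure α} {ν : Measure β} {f : α → E}
    {g : β → E} (hf : Integrable f μ) (hg : Integrable g ν) :
    Integrable (fun p : α × β => inner ℝ (f p.1) (g p.2)) (μ.prod ν) :=
  hf.op_fst_snd (continuous_inner (𝕜 := ℝ))
    ⟨1, fun x y => by simpa using norm_inner_le_norm (𝕜 := ℝ) x y⟩ hg

section Alignment

variable {E : Type*} [NormedAddCommGroup E] [InnerProductSpace ℝ E] [CompleteSpace E]
  [MeasurableSpace E] {μ : Measure E} [IsProbabilityMeasure μ]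

theorem integral_prod_inner_sub_integral_eq_zero (hμ : Integrable (fun v : E => v) μ) :
    ∫ p, inner ℝ (p.1 - ∫ u, u ∂μ) (p.2 - ∫ u, u ∂μ) ∂(μ.prod μ) = 0 := by
  set m := ∫ u, u ∂μ
  have hcen : Integrable (fun v => v - m) μ := hμ.sub (integrable_const m)
  have hzero : ∫ v, (v - m) ∂μ = 0 := by
    simp [integral_sub hμ (integrable_const m), m]
  rw [integral_prod _ (integrable_inner_fst_snd hcen hcen)]
  simp only [integral_inner hcen, hzero, inner_zero_right, integral_zero]

theorem integral_integral_mul_inner_sub_le {γ : E → E → ℝ} {c : ℝ}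
    (hγm : Measurable (uncurry γ)) (hγ : ∀ x y, γ x y + γ y x = 1) (hc : ∀ x y, c ≤ γ x y)
    (hμ : MemLp (fun v : E => v) 2 μ) :
    ∫ v, ∫ w, γ v w * inner ℝ (v - ∫ u, u ∂μ) (w - v) ∂μ ∂μ ≤
      -c * ∫ v, ‖v - (∫ u, u ∂μ)‖ ^ 2 ∂μ := by
  set m := ∫ u, u ∂μ
  -- `c ≤ γ x y = 1 - γ y x ≤ 1 - c`
  have hbdd : ∀ᵐ p ∂(μ.prod μ), ‖uncurry γ p‖ ≤ |c| + |1 - c| := ae_of_all _ fun p => by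
    have := hγ p.1 p.2
    have := hc p.2 p.1
    have := hc p.1 p.2
    change |γ p.1 p.2| ≤ _
    rw [abs_le]
    constructor <;> linarith [neg_abs_le c, le_abs_self (1 - c), abs_nonneg c, abs_nonneg (1 - c)]
  have hid : Integrable (fun v : E => v) μ := hμ.integrable one_le_two
  have hcen : Integrable (fun v => v - m) μ := hid.sub (integrable_const m)
  have hsq : Integrable (fun v => ‖v - m‖ ^ 2) μ :=
    (memLp_two_iff_integrable_sq_norm hcen.1).1 (hμ.sub (memLp_const m))
  have hcross : Integrable (fun p : E × E => γ p.1 p.2 * inner ℝ (p.1 - m) (p.2 - m))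
      (μ.prod μ) :=
    (integrable_inner_fst_snd hcen hcen).bdd_mul hγm.aestronglyMeasurable hbdd
  have hdiag : Integrable (fun p : E × E => γ p.1 p.2 * ‖p.1 - m‖ ^ 2) (μ.prod μ) :=
    (hsq.comp_fst μ).bdd_mul hγm.aestronglyMeasurable hbdd
  have hsplit : ∀ p : E × E, γ p.1 p.2 * inner ℝ (p.1 - m) (p.2 - p.1) =
      γ p.1 p.2 * inner ℝ (p.1 - m) (p.2 - m) - γ p.1 p.2 * ‖p.1 - m‖ ^ 2 := fun p => by
    rw [← sub_sub_sub_cancel_right p.2 p.1 m, inner_sub_right, real_inner_self_eq_norm_sq]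
    ring
  have hint : Integrable (fun p : E × E => γ p.1 p.2 * inner ℝ (p.1 - m) (p.2 - p.1))
      (μ.prod μ) :=
    (hcross.sub hdiag).congr (ae_of_all _ fun p => (hsplit p).symm)
  calc ∫ v, ∫ w, γ v w * inner ℝ (v - m) (w - v) ∂μ ∂μ
      = ∫ p, γ p.1 p.2 * inner ℝ (p.1 - m) (p.2 - p.1) ∂(μ.prod μ) :=
        (integral_prod _ hint).symm
    _ = ∫ p, γ p.1 p.2 * inner ℝ (p.1 - m) (p.2 - m) ∂(μ.prod μ)
          - ∫ p, γ p.1 p.2 * ‖p.1 - m‖ ^ 2 ∂(μ.prod μ) := by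
        simp only [hsplit]
        exact integral_sub hcross hdiag
    _ = -∫ p, γ p.1 p.2 * ‖p.1 - m‖ ^ 2 ∂(μ.prod μ) := by
        rw [integral_prod_mul_of_add_swap_eq_one (f := fun v w => inner ℝ (v - m) (w - m)) hγ
          (fun _ _ => real_inner_comm _ _) hcross, integral_prod_inner_sub_integral_eq_zero hid]
        ring
    _ ≤ -∫ p, c * ‖p.1 - m‖ ^ 2 ∂(μ.prod μ) :=
        neg_le_neg (integral_mono ((hsq.comp_fst μ).const_mul c) hdiag fun p =>
          mul_le_mul_of_nonneg_right (hc p.1 p.2) (sq_nonneg _))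
    _ = -c * ∫ v, ‖v - m‖ ^ 2 ∂μ := by
        rw [integral_const_mul, integral_fun_fst (fun v => ‖v - m‖ ^ 2)]
        simp

end Alignment

theorem one_sub_div_one_add_sq_div_two_le {e : ℝ} (he : 0 ≤ e) :
    (1 - (1 + e ^ 2) / (1 + e) ^ 2) / 2 ≤ e / (1 + e) := by
  rw [div_le_div_iff₀ two_pos (by positivity), one_sub_div (by positivity), div_mul_eq_mul_div,
    div_le_iff₀ (by positivity)]
  nlinarith [mul_nonneg he (sq_nonneg e), mul_nonneg he he]

theorem cross_alignment_bound_general {d : ℕ}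
    (μ : Measure (EuclideanSpace ℝ (Fin d))) [IsProbabilityMeasure μ]
    (𝓔 : EuclideanSpace ℝ (Fin d) → ℝ) (h𝓔 : Measurable 𝓔)
    (hbA : BddAbove (Set.range 𝓔)) (hbB : BddBelow (Set.range 𝓔))
    (hmom : Integrable (fun v => ‖v‖ ^ 2) μ)
    (β : ℝ) (hβ : 0 < β) :
    let γ : EuclideanSpace ℝ (Fin d) → EuclideanSpace ℝ (Fin d) → ℝ :=
      fun x y => Real.exp (-β * 𝓔 y) / (Real.exp (-β * 𝓔 x) + Real.exp (-β * 𝓔 y))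
    let m := ∫ v, v ∂μ
    let Einf := sInf (Set.range 𝓔)
    let Esup := sSup (Set.range 𝓔)
    let ξβ := (1 + Real.exp (-2 * β * (Esup - Einf))) /
      (1 + Real.exp (-β * (Esup - Einf))) ^ 2
    (∫ v, ∫ w, γ v w * (inner ℝ (v - m) (w - v) : ℝ) ∂μ ∂μ) ≤
      -(1 - ξβ) * ((1 / 2) * ∫ v, ‖v - m‖ ^ 2 ∂μ) := by
  intro γ m Einf Esup ξβ
  set e := Real.exp (-β * (Esup - Einf))
  have hratio : ∀ x y, e * Real.exp (-β * 𝓔 x) ≤ Real.exp (-β * 𝓔 y) := fun x y => by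
    rw [← Real.exp_add, Real.exp_le_exp]
    nlinarith [hβ.le, csInf_le hbB ⟨x, rfl⟩, le_csSup hbA ⟨y, rfl⟩]
  have hξ : ξβ = (1 + e ^ 2) / (1 + e) ^ 2 := by
    have : Real.exp (-2 * β * (Esup - Einf)) = e ^ 2 := by
      rw [sq, ← Real.exp_add]
      ring_nf
    simp only [ξβ, this, e]
  have hmem : MemLp (fun v => v) 2 μ :=
    (memLp_two_iff_integrable_sq_norm aestronglyMeasurable_id).2 hmom
  have hvar : 0 ≤ ∫ v, ‖v - m‖ ^ 2 ∂μ := integral_nonneg fun _ => sq_nonneg _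
  calc (∫ v, ∫ w, γ v w * (inner ℝ (v - m) (w - v) : ℝ) ∂μ ∂μ)
      ≤ -(e / (1 + e)) * ∫ v, ‖v - m‖ ^ 2 ∂μ :=
        integral_integral_mul_inner_sub_le (pairWeight.measurable_uncurry (by fun_prop))
          (pairWeight.add_swap fun _ => Real.exp_pos _)
          (fun _ _ => pairWeight.div_one_add_le (Real.exp_pos _).le (fun _ => Real.exp_pos _)
            (hratio _ _)) hmem
    _ ≤ -(1 - ξβ) * ((1 / 2) * ∫ v, ‖v - m‖ ^ 2 ∂μ) := by
        have := mul_le_mul_of_nonneg_right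
          (one_sub_div_one_add_sq_div_two_le (Real.exp_pos (-β * (Esup - Einf))).le) hvar
        rw [hξ]
        linarith

/-- Bound on the cross alignment term:
`∫∫ γ_β(v,v_*) ⟨v - m, v_* - v⟩ dμ dμ ≤ -(1 - ξ_β) (1/2) ∫ ‖v - m‖² dμ`. -/
theorem cross_alignment_bound {d : ℕ} (hd : 1 ≤ d)
    (μ : Measure (EuclideanSpace ℝ (Fin d))) [IsProbabilityMeasure μ]
    (𝓔 : EuclideanSpace ℝ (Fin d) → ℝ) (h𝓔 : Measurable 𝓔)
    (hbA : BddAbove (Set.range 𝓔)) (hbB : BddBelow (Set.range 𝓔))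
    (hmom : Integrable (fun v => ‖v‖ ^ 2) μ)
    (β : ℝ) (hβ : 0 < β) :
    let γ : EuclideanSpace ℝ (Fin d) → EuclideanSpace ℝ (Fin d) → ℝ :=
      fun x y => Real.exp (-β * 𝓔 y) / (Real.exp (-β * 𝓔 x) + Real.exp (-β * 𝓔 y))
    let m := ∫ v, v ∂μ
    let Einf := sInf (Set.range 𝓔)
    let Esup := sSup (Set.range 𝓔)
    let ξβ := (1 + Real.exp (-2 * β * (Esup - Einf))) /
      (1 + Real.exp (-β * (Esup - Einf))) ^ 2
    (∫ v, ∫ w, γ v w * (inner ℝ (v - m) (w - v) : ℝ) ∂μ ∂μ) ≤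
      -(1 - ξβ) * ((1 / 2) * ∫ v, ‖v - m‖ ^ 2 ∂μ) :=
  cross_alignment_bound_general μ 𝓔 h𝓔 hbA hbB hmom β hβ
end

section
/- Jensen-type bound for the macroscopic collective estimate: for every α > 0, ‖v_{α,𝓔}(μ) − m‖² ≤ (C_{α,𝓔} − 1) ∫ ‖v − m‖² dμ(v), where C_{α,𝓔} := exp(α(𝓔̄ − 𝓔̲)). -/
/-!
Normalising the Gibbs weight `e^{-α𝓔}` gives a probability density `ρ` with respect to `μ`, and
`ρ ≤ e^{-α inf 𝓔} / ∫ e^{-α𝓔} dμ ≤ C`. Since `ρ - 1` has mean zero,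
`v_α - m = ∫ (ρ - 1) (v - m) dμ`, so Cauchy–Schwarz bounds `‖v_α - m‖²` by
`∫ (ρ - 1)² dμ · ∫ ‖v - m‖² dμ`, and `∫ (ρ - 1)² dμ = ∫ ρ² dμ - 1 ≤ sup ρ - 1 ≤ C - 1`.
-/

open MeasureTheory

section

variable {Ω E : Type*} [MeasurableSpace Ω] {μ : Measure Ω}
  [NormedAddCommGroup E] [NormedSpace ℝ E]

theorem norm_integral_smul_sq_le {φ : Ω → ℝ} {f : Ω → E} (hφ : MemLp φ 2 μ) (hf : MemLp f 2 μ) :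
    ‖∫ x, φ x • f x ∂μ‖ ^ 2 ≤ (∫ x, φ x ^ 2 ∂μ) * ∫ x, ‖f x‖ ^ 2 ∂μ := by
  have holder := integral_mul_norm_le_Lp_mul_Lq Real.HolderConjugate.two_two
    (by simpa using hφ) (by simpa using hf.norm)
  simp only [Real.rpow_two, Real.norm_eq_abs, abs_norm, sq_abs, ← Real.sqrt_eq_rpow] at holder
  calc ‖∫ x, φ x • f x ∂μ‖ ^ 2 ≤ (∫ x, |φ x| * ‖f x‖ ∂μ) ^ 2 := by
        gcongr
        simpa only [norm_smul, Real.norm_eq_abs] using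
          norm_integral_le_integral_norm fun x ↦ φ x • f x
    _ ≤ (√(∫ x, φ x ^ 2 ∂μ) * √(∫ x, ‖f x‖ ^ 2 ∂μ)) ^ 2 := by gcongr
    _ = (∫ x, φ x ^ 2 ∂μ) * ∫ x, ‖f x‖ ^ 2 ∂μ := by
        rw [mul_pow, Real.sq_sqrt (integral_nonneg fun _ ↦ sq_nonneg _),
          Real.sq_sqrt (integral_nonneg fun _ ↦ sq_nonneg _)]

variable [IsProbabilityMeasure μ]

theorem integral_sub_one_sq_le {ρ : Ω → ℝ} {K : ℝ} (hρ : Integrable ρ μ) (hρ_one : ∫ x, ρ x ∂μ = 1)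
    (hρ_nonneg : 0 ≤ᵐ[μ] ρ) (hρ_le : ∀ᵐ x ∂μ, ρ x ≤ K) :
    ∫ x, (ρ x - 1) ^ 2 ∂μ ≤ K - 1 := by
  -- `ρ ^ 2 ≤ K ρ` pointwise, and `ρ` integrates to `1`
  have hpt : ∀ᵐ x ∂μ, (ρ x - 1) ^ 2 ≤ (K - 2) * ρ x + 1 := by
    filter_upwards [hρ_nonneg, hρ_le] with x h0 hK
    nlinarith [mul_le_mul_of_nonneg_left hK h0]
  calc ∫ x, (ρ x - 1) ^ 2 ∂μ ≤ ∫ x, ((K - 2) * ρ x + 1) ∂μ :=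
        integral_mono_of_nonneg (ae_of_all _ fun _ ↦ sq_nonneg _)
          ((hρ.const_mul _).add (integrable_const _)) hpt
    _ = K - 1 := by
        rw [integral_add (hρ.const_mul _) (integrable_const _), integral_const_mul, hρ_one]
        simp only [integral_const, probReal_univ, smul_eq_mul, mul_one]
        ring

theorem norm_integral_smul_sub_integral_sq_le [CompleteSpace E] {ρ : Ω → ℝ} {X : Ω → E} {K : ℝ}
    (hX : MemLp X 2 μ) (hρ : AEStronglyMeasurable ρ μ) (hρ_one : ∫ x, ρ x ∂μ = 1)
    (hρ_nonneg : 0 ≤ᵐ[μ] ρ) (hρ_le : ∀ᵐ x ∂μ, ρ x ≤ K) :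
    ‖∫ x, ρ x • X x ∂μ - ∫ x, X x ∂μ‖ ^ 2 ≤ (K - 1) * ∫ x, ‖X x - ∫ y, X y ∂μ‖ ^ 2 ∂μ := by
  set m := ∫ x, X x ∂μ
  have hρ_top : MemLp ρ ⊤ μ := memLp_top_of_bound hρ K <| by
    filter_upwards [hρ_nonneg, hρ_le] with x h0 hK
    rwa [Real.norm_of_nonneg h0]
  have hρ_int : Integrable ρ μ := hρ_top.integrable le_top
  have hX_int : Integrable X μ := hX.integrable one_le_two
  -- `ρ - 1` integrates to `0`, so we may centre `X` at its mean
  have hcentered : ∫ x, ρ x • X x ∂μ - m = ∫ x, (ρ x - 1) • (X x - m) ∂μ := by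
    have hexpand : ∀ x, (ρ x - 1) • (X x - m) = (ρ x • X x - X x) - (ρ x - 1) • m := fun x ↦ by
      simp only [sub_smul, smul_sub, one_smul]
    have hρX : Integrable (fun x ↦ ρ x • X x) μ := hX_int.smul_of_top_right hρ_top
    have hρm : Integrable (fun x ↦ (ρ x - 1) • m) μ :=
      (hρ_int.sub (integrable_const 1)).smul_const m
    have hρX_sub_X : Integrable (fun x ↦ ρ x • X x - X x) μ := hρX.sub hX_int
    simp_rw [hexpand]
    rw [integral_sub hρX_sub_X hρm, integral_sub hρX hX_int, integral_smul_const,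
      integral_sub hρ_int (integrable_const 1), hρ_one]
    simp [m]
  rw [hcentered]
  calc _ ≤ (∫ x, (ρ x - 1) ^ 2 ∂μ) * ∫ x, ‖X x - m‖ ^ 2 ∂μ :=
        norm_integral_smul_sq_le ((hρ_top.sub (memLp_const 1)).mono_exponent le_top)
          (hX.sub (memLp_const m))
    _ ≤ (K - 1) * ∫ x, ‖X x - m‖ ^ 2 ∂μ :=
        mul_le_mul_of_nonneg_right (integral_sub_one_sq_le hρ_int hρ_one hρ_nonneg hρ_le)
          (integral_nonneg fun _ ↦ sq_nonneg _)

theorem norm_weighted_integral_sub_integral_sq_le [CompleteSpace E] {g : Ω → ℝ} {X : Ω → E}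
    {a A : ℝ} (hX : MemLp X 2 μ) (hg : AEStronglyMeasurable g μ) (ha : 0 < a)
    (hg_ge : ∀ᵐ x ∂μ, a ≤ g x) (hg_le : ∀ᵐ x ∂μ, g x ≤ A) :
    ‖(∫ x, g x ∂μ)⁻¹ • ∫ x, g x • X x ∂μ - ∫ x, X x ∂μ‖ ^ 2
      ≤ (A / a - 1) * ∫ x, ‖X x - ∫ y, X y ∂μ‖ ^ 2 ∂μ := by
  set Z := ∫ x, g x ∂μ
  have hg_int : Integrable g μ := Integrable.of_bound hg A <| by
    filter_upwards [hg_ge, hg_le] with x h_ge h_le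
    rwa [Real.norm_of_nonneg (ha.le.trans h_ge)]
  have hZ : a ≤ Z := by simpa using integral_mono_ae (integrable_const a) hg_int hg_ge
  have hZ_pos : 0 < Z := ha.trans_le hZ
  have hnormalize : Z⁻¹ • ∫ x, g x • X x ∂μ = ∫ x, (Z⁻¹ * g x) • X x ∂μ := by
    simp_rw [← integral_smul, smul_smul]
  rw [hnormalize]
  refine norm_integral_smul_sub_integral_sq_le hX (hg.const_mul Z⁻¹) ?_ ?_ ?_
  · rw [integral_const_mul, inv_mul_cancel₀ hZ_pos.ne']
  · filter_upwards [hg_ge] with x h_ge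
    exact mul_nonneg (inv_nonneg.2 hZ_pos.le) (ha.le.trans h_ge)
  · filter_upwards [hg_ge, hg_le] with x h_ge h_le
    rw [inv_mul_eq_div]
    exact div_le_div₀ (ha.le.trans (h_ge.trans h_le)) h_le ha hZ

end

theorem macroscopic_estimate_jensen_bound_general {d : ℕ}
    (μ : Measure (EuclideanSpace ℝ (Fin d))) [IsProbabilityMeasure μ]
    (𝓔 : EuclideanSpace ℝ (Fin d) → ℝ) (h𝓔 : Measurable 𝓔)
    (hbA : BddAbove (Set.range 𝓔)) (hbB : BddBelow (Set.range 𝓔))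
    (hmom : Integrable (fun v => ‖v‖ ^ 2) μ)
    (α : ℝ) (hα : 0 < α) :
    let m := ∫ v, v ∂μ
    let vα := (∫ v, Real.exp (-α * 𝓔 v) ∂μ)⁻¹ • ∫ v, Real.exp (-α * 𝓔 v) • v ∂μ
    let C := Real.exp (α * (sSup (Set.range 𝓔) - sInf (Set.range 𝓔)))
    ‖vα - m‖ ^ 2 ≤ (C - 1) * ∫ v, ‖v - m‖ ^ 2 ∂μ := by
  intro m vα C
  have hX : MemLp (fun v ↦ v) 2 μ :=
    (memLp_two_iff_integrable_sq_norm aestronglyMeasurable_id).2 hmom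
  have hweight_ge (v) : Real.exp (-α * sSup (Set.range 𝓔)) ≤ Real.exp (-α * 𝓔 v) :=
    Real.exp_le_exp.2 <| mul_le_mul_of_nonpos_left (le_csSup hbA ⟨v, rfl⟩) (neg_nonpos.2 hα.le)
  have hweight_le (v) : Real.exp (-α * 𝓔 v) ≤ Real.exp (-α * sInf (Set.range 𝓔)) :=
    Real.exp_le_exp.2 <| mul_le_mul_of_nonpos_left (csInf_le hbB ⟨v, rfl⟩) (neg_nonpos.2 hα.le)
  have hbound := norm_weighted_integral_sub_integral_sq_le hX
    (h𝓔.const_mul (-α)).exp.aestronglyMeasurable (Real.exp_pos _)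
    (ae_of_all μ hweight_ge) (ae_of_all μ hweight_le)
  have hC : Real.exp (-α * sInf (Set.range 𝓔)) / Real.exp (-α * sSup (Set.range 𝓔)) = C := by
    rw [← Real.exp_sub]; congr 1; ring
  rwa [hC] at hbound

/-- Jensen-type bound for the macroscopic collective estimate:
`‖v_{α,𝓔}(μ) - m‖² ≤ (C_{α,𝓔} - 1) ∫ ‖v - m‖² dμ`. -/
theorem macroscopic_estimate_jensen_bound {d : ℕ} (hd : 1 ≤ d)
    (μ : Measure (EuclideanSpace ℝ (Fin d))) [IsProbabilityMeasure μ]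
    (𝓔 : EuclideanSpace ℝ (Fin d) → ℝ) (h𝓔 : Measurable 𝓔)
    (hbA : BddAbove (Set.range 𝓔)) (hbB : BddBelow (Set.range 𝓔))
    (hmom : Integrable (fun v => ‖v‖ ^ 2) μ)
    (α : ℝ) (hα : 0 < α) :
    let m := ∫ v, v ∂μ
    let vα := (∫ v, Real.exp (-α * 𝓔 v) ∂μ)⁻¹ • ∫ v, Real.exp (-α * 𝓔 v) • v ∂μ
    let C := Real.exp (α * (sSup (Set.range 𝓔) - sInf (Set.range 𝓔)))
    ‖vα - m‖ ^ 2 ≤ (C - 1) * ∫ v, ‖v - m‖ ^ 2 ∂μ :=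
  macroscopic_estimate_jensen_bound_general μ 𝓔 h𝓔 hbA hbB hmom α hα
end

section
/- Second-moment bound for the macroscopic collective estimate: for every α > 0, ∫ ‖v_{α,𝓔}(μ) − v‖² dμ(v) ≤ C_{α,𝓔} ∫ ‖v − m‖² dμ(v), where C_{α,𝓔} := exp(α(𝓔̄ − 𝓔̲)). -/
/-!
The Gibbs weight `w = exp (-α 𝓔)` takes values in `[exp (-α sup 𝓔), exp (-α inf 𝓔)]`, and the
estimate `v_α` is the mean of `v` under `w μ`, hence the minimiser of `c ↦ ∫ w ‖c - v‖² dμ`.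
Comparing `μ` with `w μ` costs the factor `exp (α sup 𝓔)` on one side and `exp (-α inf 𝓔)` on
the other, and in between `v_α` may be replaced by `m`.
-/

open MeasureTheory

section WeightedMean

variable {E : Type*} [NormedAddCommGroup E] [InnerProductSpace ℝ E] [CompleteSpace E]
  [MeasurableSpace E] {μ : Measure E} {w : E → ℝ}

noncomputable def weightedMean (μ : Measure E) (w : E → ℝ) : E :=
  (∫ v, w v ∂μ)⁻¹ • ∫ v, w v • v ∂μ

theorem integral_mul_norm_sub_sq (hw : Integrable w μ) (hwv : Integrable (fun v => w v • v) μ)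
    (hwv2 : Integrable (fun v => w v * ‖v‖ ^ 2) μ) (c : E) :
    ∫ v, w v * ‖c - v‖ ^ 2 ∂μ =
      (∫ v, w v ∂μ) * ‖c‖ ^ 2 - 2 * inner ℝ c (∫ v, w v • v ∂μ) + ∫ v, w v * ‖v‖ ^ 2 ∂μ := by
  have hexpand : (fun v => w v * ‖c - v‖ ^ 2) =
      fun v => ‖c‖ ^ 2 * w v - 2 * inner ℝ c (w v • v) + w v * ‖v‖ ^ 2 := by
    funext v
    rw [norm_sub_sq_real, real_inner_smul_right]
    ring
  have hw' : Integrable (fun v => ‖c‖ ^ 2 * w v) μ := hw.const_mul _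
  have hinner : Integrable (fun v => 2 * inner ℝ c (w v • v)) μ := (hwv.const_inner c).const_mul 2
  have hdiff : Integrable (fun v => ‖c‖ ^ 2 * w v - 2 * inner ℝ c (w v • v)) μ := hw'.sub hinner
  rw [hexpand, integral_add hdiff hwv2, integral_sub hw' hinner, integral_const_mul,
    integral_const_mul, integral_inner hwv]
  ring

theorem integral_mul_norm_sub_sq_eq (hw : Integrable w μ) (hwv : Integrable (fun v => w v • v) μ)
    (hwv2 : Integrable (fun v => w v * ‖v‖ ^ 2) μ) (hZ : ∫ v, w v ∂μ ≠ 0) (c : E) :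
    ∫ v, w v * ‖c - v‖ ^ 2 ∂μ =
      ∫ v, w v * ‖weightedMean μ w - v‖ ^ 2 ∂μ +
        (∫ v, w v ∂μ) * ‖c - weightedMean μ w‖ ^ 2 := by
  have hI : ∫ v, w v • v ∂μ = (∫ v, w v ∂μ) • weightedMean μ w := by
    rw [weightedMean, smul_inv_smul₀ hZ]
  rw [integral_mul_norm_sub_sq hw hwv hwv2, integral_mul_norm_sub_sq hw hwv hwv2, hI,
    real_inner_smul_right, real_inner_smul_right, real_inner_self_eq_norm_sq, norm_sub_sq_real]
  ring

theorem integral_mul_norm_weightedMean_sub_sq_le (hw : Integrable w μ)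
    (hwv : Integrable (fun v => w v • v) μ) (hwv2 : Integrable (fun v => w v * ‖v‖ ^ 2) μ)
    (hZ : 0 < ∫ v, w v ∂μ) (c : E) :
    ∫ v, w v * ‖weightedMean μ w - v‖ ^ 2 ∂μ ≤ ∫ v, w v * ‖c - v‖ ^ 2 ∂μ := by
  rw [integral_mul_norm_sub_sq_eq hw hwv hwv2 hZ.ne' c]
  exact le_add_of_nonneg_right (by positivity)

theorem integral_norm_weightedMean_sub_sq_le [IsFiniteMeasure μ] [NeZero μ]
    (hX : MemLp (fun v => v) 2 μ) (hw : AEStronglyMeasurable w μ) {a b : ℝ} (ha : 0 < a)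
    (haw : ∀ᵐ v ∂μ, a ≤ w v) (hwb : ∀ᵐ v ∂μ, w v ≤ b) (c : E) :
    ∫ v, ‖weightedMean μ w - v‖ ^ 2 ∂μ ≤ b / a * ∫ v, ‖c - v‖ ^ 2 ∂μ := by
  have hw_norm : ∀ᵐ v ∂μ, ‖w v‖ ≤ b := by
    filter_upwards [haw, hwb] with v hav hvb
    rwa [Real.norm_of_nonneg (ha.le.trans hav)]
  have hsq : ∀ y : E, Integrable (fun v => ‖y - v‖ ^ 2) μ := fun y =>
    (memLp_two_iff_integrable_sq_norm (aestronglyMeasurable_const.sub hX.1)).1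
      ((memLp_const y).sub hX)
  have hw_int : Integrable w μ := (integrable_const b).mono' hw hw_norm
  have hwv : Integrable (fun v => w v • v) μ := (hX.integrable one_le_two).bdd_smul b hw hw_norm
  have hwv2 : Integrable (fun v => w v * ‖v‖ ^ 2) μ :=
    ((memLp_two_iff_integrable_sq_norm hX.1).1 hX).bdd_mul hw hw_norm
  have hwsq : ∀ y : E, Integrable (fun v => w v * ‖y - v‖ ^ 2) μ := fun y =>
    (hsq y).bdd_mul hw hw_norm
  have hZ : 0 < ∫ v, w v ∂μ := by
    have hμ : 0 < μ.real Set.univ := measureReal_univ_pos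
    calc 0 < ∫ _, a ∂μ := by rw [integral_const, smul_eq_mul]; positivity
      _ ≤ ∫ v, w v ∂μ := integral_mono_ae (integrable_const a) hw_int haw
  calc ∫ v, ‖weightedMean μ w - v‖ ^ 2 ∂μ
      ≤ ∫ v, a⁻¹ * (w v * ‖weightedMean μ w - v‖ ^ 2) ∂μ := by
        refine integral_mono_ae (hsq _) ((hwsq _).const_mul _) ?_
        filter_upwards [haw] with v hav
        rw [← mul_assoc]
        exact le_mul_of_one_le_left (by positivity) ((one_le_inv_mul₀ ha).2 hav)
    _ ≤ ∫ v, a⁻¹ * (w v * ‖c - v‖ ^ 2) ∂μ := by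
        rw [integral_const_mul, integral_const_mul]
        exact mul_le_mul_of_nonneg_left
          (integral_mul_norm_weightedMean_sub_sq_le hw_int hwv hwv2 hZ c) (by positivity)
    _ ≤ ∫ v, a⁻¹ * (b * ‖c - v‖ ^ 2) ∂μ := by
        refine integral_mono_ae ((hwsq _).const_mul _) (((hsq _).const_mul _).const_mul _) ?_
        filter_upwards [hwb] with v hvb
        gcongr
    _ = b / a * ∫ v, ‖c - v‖ ^ 2 ∂μ := by
        rw [integral_const_mul, integral_const_mul, div_eq_inv_mul, mul_assoc]

end WeightedMean

theorem macroscopic_estimate_second_moment_bound_general {d : ℕ}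
    (μ : Measure (EuclideanSpace ℝ (Fin d))) [IsProbabilityMeasure μ]
    (𝓔 : EuclideanSpace ℝ (Fin d) → ℝ) (h𝓔 : Measurable 𝓔)
    (hbA : BddAbove (Set.range 𝓔)) (hbB : BddBelow (Set.range 𝓔))
    (hmom : Integrable (fun v => ‖v‖ ^ 2) μ)
    (α : ℝ) (hα : 0 < α) :
    let m := ∫ v, v ∂μ
    let vα := (∫ v, Real.exp (-α * 𝓔 v) ∂μ)⁻¹ • ∫ v, Real.exp (-α * 𝓔 v) • v ∂μ
    let C := Real.exp (α * (sSup (Set.range 𝓔) - sInf (Set.range 𝓔)))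
    (∫ v, ‖vα - v‖ ^ 2 ∂μ) ≤ C * ∫ v, ‖v - m‖ ^ 2 ∂μ := by
  intro m vα C
  have hlower : ∀ v, Real.exp (-α * sSup (Set.range 𝓔)) ≤ Real.exp (-α * 𝓔 v) := fun v =>
    Real.exp_le_exp.2 (by nlinarith [le_csSup hbA (Set.mem_range_self v)])
  have hupper : ∀ v, Real.exp (-α * 𝓔 v) ≤ Real.exp (-α * sInf (Set.range 𝓔)) := fun v =>
    Real.exp_le_exp.2 (by nlinarith [csInf_le hbB (Set.mem_range_self v)])
  have hX : MemLp (fun v => v) 2 μ :=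
    (memLp_two_iff_integrable_sq_norm aestronglyMeasurable_id).2 hmom
  have hw : AEStronglyMeasurable (fun v => Real.exp (-α * 𝓔 v)) μ :=
    (Real.measurable_exp.comp (h𝓔.const_mul (-α))).aestronglyMeasurable
  calc ∫ v, ‖vα - v‖ ^ 2 ∂μ
      ≤ Real.exp (-α * sInf (Set.range 𝓔)) / Real.exp (-α * sSup (Set.range 𝓔)) *
          ∫ v, ‖m - v‖ ^ 2 ∂μ :=
        integral_norm_weightedMean_sub_sq_le hX hw (Real.exp_pos _) (ae_of_all _ hlower)
          (ae_of_all _ hupper) m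
    _ = C * ∫ v, ‖v - m‖ ^ 2 ∂μ := by
        simp_rw [← Real.exp_sub, norm_sub_rev m]
        exact congrArg (· * _) (congrArg Real.exp (by ring))

/-- Second-moment bound for the macroscopic collective estimate:
`∫ ‖v_{α,𝓔}(μ) - v‖² dμ(v) ≤ C_{α,𝓔} ∫ ‖v - m‖² dμ(v)`. -/
theorem macroscopic_estimate_second_moment_bound {d : ℕ} (hd : 1 ≤ d)
    (μ : Measure (EuclideanSpace ℝ (Fin d))) [IsProbabilityMeasure μ]
    (𝓔 : EuclideanSpace ℝ (Fin d) → ℝ) (h𝓔 : Measurable 𝓔)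
    (hbA : BddAbove (Set.range 𝓔)) (hbB : BddBelow (Set.range 𝓔))
    (hmom : Integrable (fun v => ‖v‖ ^ 2) μ)
    (α : ℝ) (hα : 0 < α) :
    let m := ∫ v, v ∂μ
    let vα := (∫ v, Real.exp (-α * 𝓔 v) ∂μ)⁻¹ • ∫ v, Real.exp (-α * 𝓔 v) • v ∂μ
    let C := Real.exp (α * (sSup (Set.range 𝓔) - sInf (Set.range 𝓔)))
    (∫ v, ‖vα - v‖ ^ 2 ∂μ) ≤ C * ∫ v, ‖v - m‖ ^ 2 ∂μ :=
  macroscopic_estimate_second_moment_bound_general μ 𝓔 h𝓔 hbA hbB hmom α hα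
end
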